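/- arXiv:2402.03276 — 2 statements merged into one kernel-verified Lean document; each statement's English description precedes it below -/
import Mathlib

section
/- For every ε > 0 and every α ∈ (0,1], the set {m ∈ ℤ⁺ : for all natural numbers k with ⌊α·log₂ m⌋ ≤ k ≤ ⌊log₂ m⌋, −ε·k < (Σ_{i=0}^{k−1} p(m)_i) − k/2 < ε·k} is *-dense. -/
/-- The accelerated Collatz map `T(m) = m/2` if `m` even, `(3m+1)/2` if `m` odd. -/
def T (m : ℕ) : ℕ := if m % 2 = 0 then m / 2 else (3 * m + 1) / 2

/-- The parity sequence of `m`: `p(m)_k = T^[k] m mod 2`. -/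
def parity (m k : ℕ) : ℕ := T^[k] m % 2

open scoped Classical in
/-- Number of elements of `A` in `{1, …, n}`. -/
noncomputable def countIn (A : Set ℕ) (n : ℕ) : ℕ :=
  ((Finset.Icc 1 n).filter (fun m => m ∈ A)).card

/-- `S` has `(C,D)`-density: `#(S ∩ [1,N])/N ≥ 1 - C/N^D` for every positive `N`. -/
def hasCDdensity (S : Set ℕ) (C D : ℝ) : Prop :=
  ∀ N : ℕ, 0 < N → 1 - C / (N : ℝ) ^ D ≤ (countIn S N : ℝ) / N

/-- `S` has `D`-density: it has `(C,D)`-density for some `C > 0`. -/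
def hasDdensity (S : Set ℕ) (D : ℝ) : Prop := ∃ C > 0, hasCDdensity S C D

/-- `S` is `*`-dense: it has `D`-density for some `0 < D ≤ 1`. -/
def starDense (S : Set ℕ) : Prop := ∃ D, 0 < D ∧ D ≤ 1 ∧ hasDdensity S D

/-!
The sum `S_k(m) = ∑_{i<k} p(m)_i` depends only on `m mod 2^k`, and splitting residues into even
and odd ones gives `∑_{r<2^k} a^{S_k(r)} b^{k - S_k(r)} = (a + b)^k`: the parity vectors of the
residues mod `2^k` are all of `{0,1}^k`, each once. A Chernoff bound then leaves at most
`2 (2e^{-ε²/3})^k` residues with `|S_k - k/2| ≥ εk`, hence at most `4N e^{-kε²/3}` such `m ≤ N`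
when `2^k ≤ N`. An `m > √N` only involves levels `k ≥ (α/2) log₂ N`, and the geometric series
over those levels leaves `O(N^{1-δ})` exceptions.
-/

open Finset Real

def paritySum (k m : ℕ) : ℕ := ∑ i ∈ range k, parity m i

lemma parity_succ (m i : ℕ) : parity m (i + 1) = parity (T m) i := by
  rw [parity, parity, Function.iterate_succ_apply]

lemma paritySum_succ (k m : ℕ) : paritySum (k + 1) m = m % 2 + paritySum k (T m) := by
  simp only [paritySum, sum_range_succ', parity_succ]
  exact add_comm _ _

lemma paritySum_le (k m : ℕ) : paritySum k m ≤ k :=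
  (sum_le_card_nsmul _ _ 1 fun _ _ => Nat.le_of_lt_succ (Nat.mod_lt _ two_pos)).trans (by simp)

lemma T_two_mul (s : ℕ) : T (2 * s) = s := by
  rw [T, if_pos (by omega)]; omega

lemma T_two_mul_add_one (s : ℕ) : T (2 * s + 1) = 3 * s + 2 := by
  rw [T, if_neg (by omega)]; omega

lemma two_mul_T_of_mod_two_eq_zero {n : ℕ} (h : n % 2 = 0) : 2 * T n = n := by
  rw [T, if_pos h]; omega

lemma two_mul_T_of_mod_two_eq_one {n : ℕ} (h : n % 2 = 1) : 2 * T n = 3 * n + 1 := by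
  rw [T, if_neg (by omega)]; omega

lemma T_modEq {j m m' : ℕ} (h : m ≡ m' [MOD 2 ^ (j + 1)]) : T m ≡ T m' [MOD 2 ^ j] := by
  have hpar : m % 2 = m' % 2 := h.of_dvd (dvd_pow_self 2 j.succ_ne_zero)
  refine Nat.ModEq.mul_left_cancel' two_ne_zero ?_
  rw [← pow_succ']
  rcases Nat.mod_two_eq_zero_or_one m with hm | hm
  · rwa [two_mul_T_of_mod_two_eq_zero hm, two_mul_T_of_mod_two_eq_zero (hpar ▸ hm)]
  · rw [two_mul_T_of_mod_two_eq_one hm, two_mul_T_of_mod_two_eq_one (hpar ▸ hm)]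
    exact (h.mul_left 3).add_right 1

lemma parity_eq_of_modEq {k m m' : ℕ} (h : m ≡ m' [MOD 2 ^ k]) {i : ℕ} (hi : i < k) :
    parity m i = parity m' i := by
  induction k generalizing m m' i with
  | zero => omega
  | succ k ih =>
    cases i with
    | zero => exact h.of_dvd (dvd_pow_self 2 k.succ_ne_zero)
    | succ i => rw [parity_succ, parity_succ]; exact ih (T_modEq h) (by omega)

lemma paritySum_mod (k m : ℕ) : paritySum k (m % 2 ^ k) = paritySum k m :=
  sum_congr rfl fun _ hi => parity_eq_of_modEq (Nat.mod_modEq m _) (mem_range.mp hi)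

lemma sum_range_comp_three_mul_add_two_mod {M : Type*} [AddCommMonoid M] (k : ℕ) (f : ℕ → M) :
    ∑ s ∈ range (2 ^ k), f ((3 * s + 2) % 2 ^ k) = ∑ r ∈ range (2 ^ k), f r := by
  have hmaps : Set.MapsTo (fun s => (3 * s + 2) % 2 ^ k) (range (2 ^ k)) (range (2 ^ k)) :=
    fun _ _ => mem_range.mpr (Nat.mod_lt _ (by positivity))
  have hinj : Set.InjOn (fun s => (3 * s + 2) % 2 ^ k) (range (2 ^ k)) := by
    intro a ha b hb hab
    have h3 : 3 * a ≡ 3 * b [MOD 2 ^ k] := Nat.ModEq.add_right_cancel' 2 hab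
    have hab' := (Nat.ModEq.cancel_left_of_coprime (Nat.Coprime.pow_left k (by norm_num)) h3)
    rwa [Nat.ModEq, Nat.mod_eq_of_lt (mem_range.mp ha), Nat.mod_eq_of_lt (mem_range.mp hb)] at hab'
  exact sum_nbij _ hmaps hinj (surjOn_of_injOn_of_card_le _ hmaps hinj le_rfl) fun _ _ => rfl

lemma sum_range_two_mul {M : Type*} [AddCommMonoid M] (n : ℕ) (f : ℕ → M) :
    ∑ i ∈ range (2 * n), f i = ∑ j ∈ range n, (f (2 * j) + f (2 * j + 1)) := by
  induction n with
  | zero => simp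
  | succ n ih => rw [Nat.mul_succ, sum_range_succ, sum_range_succ, ih, sum_range_succ, add_assoc]

theorem sum_pow_paritySum_mul_pow {R : Type*} [CommSemiring R] (a b : R) (k : ℕ) :
    ∑ r ∈ range (2 ^ k), a ^ paritySum k r * b ^ (k - paritySum k r) = (a + b) ^ k := by
  let w (k r : ℕ) : R := a ^ paritySum k r * b ^ (k - paritySum k r)
  change ∑ r ∈ range (2 ^ k), w k r = (a + b) ^ k
  induction k with
  | zero => simp [w, paritySum]
  | succ k ih =>
    have heven (s : ℕ) : w (k + 1) (2 * s) = b * w k s := by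
      simp only [w]
      rw [paritySum_succ, T_two_mul, Nat.mul_mod_right, zero_add,
        Nat.sub_add_comm (paritySum_le k s), pow_succ]
      ring
    have hodd (s : ℕ) : w (k + 1) (2 * s + 1) = a * w k ((3 * s + 2) % 2 ^ k) := by
      simp only [w]
      rw [paritySum_succ, T_two_mul_add_one, paritySum_mod, show (2 * s + 1) % 2 = 1 by omega,
        show k + 1 - (1 + paritySum k (3 * s + 2)) = k - paritySum k (3 * s + 2) by omega]
      ring
    rw [pow_succ', sum_range_two_mul, sum_congr rfl fun s _ => by rw [heven, hodd],
      sum_add_distrib, ← mul_sum, ← mul_sum, sum_range_comp_three_mul_add_two_mod k (w k), ih]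
    ring

section Chernoff

variable {ε : ℝ}

lemma two_add_le_two_mul_exp_mul_rpow (hε : 0 < ε) (hε2 : ε ≤ 1 / 2) :
    2 + ε ≤ 2 * exp (-(ε ^ 2 / 3)) * (1 + ε) ^ (1 / 2 + ε) := by
  have h1ε : 0 < 1 + ε := by linarith
  have hlog : ε / (1 + ε) ≤ log (1 + ε) := by
    calc ε / (1 + ε) = 1 - (1 + ε)⁻¹ := by field_simp; ring
      _ ≤ log (1 + ε) := one_sub_inv_le_log_of_pos h1ε
  have hexponent : ε / 2 ≤ -(ε ^ 2 / 3) + (1 / 2 + ε) * log (1 + ε) := by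
    have hfrac : ε / 2 + ε ^ 2 / 3 ≤ (1 / 2 + ε) * (ε / (1 + ε)) := by
      rw [← mul_div_assoc, le_div_iff₀ h1ε]
      nlinarith
    have := mul_le_mul_of_nonneg_left hlog (by linarith : (0 : ℝ) ≤ 1 / 2 + ε)
    linarith
  calc 2 + ε ≤ 2 * exp (ε / 2) := by linarith [add_one_le_exp (ε / 2)]
    _ ≤ 2 * exp (-(ε ^ 2 / 3) + (1 / 2 + ε) * log (1 + ε)) := by gcongr
    _ = 2 * exp (-(ε ^ 2 / 3)) * (1 + ε) ^ (1 / 2 + ε) := by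
      rw [exp_add, rpow_def_of_pos h1ε, mul_comm (log _), mul_assoc]

lemma card_filter_mul_rpow_le_sum_pow {ι : Type*} (I : Finset ι) (g : ι → ℕ) {u : ℝ}
    (hu : 1 ≤ u) (a : ℝ) : (#{r ∈ I | a ≤ g r} : ℝ) * u ^ a ≤ ∑ r ∈ I, u ^ g r := by
  calc (#{r ∈ I | a ≤ g r} : ℝ) * u ^ a = ∑ _r ∈ {r ∈ I | a ≤ g r}, u ^ a := by
        rw [sum_const, nsmul_eq_mul]
    _ ≤ ∑ r ∈ {r ∈ I | a ≤ g r}, u ^ g r := sum_le_sum fun r hr => by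
        rw [← rpow_natCast]; exact rpow_le_rpow_of_exponent_le hu (mem_filter.mp hr).2
    _ ≤ ∑ r ∈ I, u ^ g r :=
        sum_le_sum_of_subset_of_nonneg (filter_subset _ _) fun _ _ _ => by positivity

lemma card_filter_le_of_sum_pow_eq (hε : 0 < ε) (hε2 : ε ≤ 1 / 2) {ι : Type*} {I : Finset ι}
    {g : ι → ℕ} {k : ℕ} (h : ∑ r ∈ I, (1 + ε) ^ g r = (2 + ε) ^ k) :
    (#{r ∈ I | (1 / 2 + ε) * k ≤ g r} : ℝ) ≤ (2 * exp (-(ε ^ 2 / 3))) ^ k := by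
  have h1ε : 0 < 1 + ε := by linarith
  have hmarkov := card_filter_mul_rpow_le_sum_pow I g (by linarith : 1 ≤ 1 + ε) ((1 / 2 + ε) * k)
  have hkey : (2 + ε) ^ k ≤ (2 * exp (-(ε ^ 2 / 3))) ^ k * (1 + ε) ^ ((1 / 2 + ε) * k) := by
    rw [rpow_mul_natCast h1ε.le, ← mul_pow]
    exact pow_le_pow_left₀ (by linarith) (two_add_le_two_mul_exp_mul_rpow hε hε2) k
  exact le_of_mul_le_mul_right ((hmarkov.trans_eq h).trans hkey) (rpow_pos_of_pos h1ε _)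

theorem card_range_not_abs_paritySum_sub_lt_le (hε : 0 < ε) (hε2 : ε ≤ 1 / 2) (k : ℕ) :
    (#{r ∈ range (2 ^ k) | ¬|(paritySum k r : ℝ) - k / 2| < ε * k} : ℝ)
      ≤ 2 * (2 * exp (-(ε ^ 2 / 3))) ^ k := by
  have hmany := card_filter_le_of_sum_pow_eq hε hε2 (I := range (2 ^ k)) (g := paritySum k)
    (k := k) (by simpa [add_comm, add_left_comm, one_add_one_eq_two] using
      sum_pow_paritySum_mul_pow (1 + ε) 1 k)
  have hfew := card_filter_le_of_sum_pow_eq hε hε2 (I := range (2 ^ k))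
    (g := fun r => k - paritySum k r) (k := k) (by simpa [add_comm, add_left_comm,
      one_add_one_eq_two] using sum_pow_paritySum_mul_pow 1 (1 + ε) k)
  have hsub : {r ∈ range (2 ^ k) | ¬|(paritySum k r : ℝ) - k / 2| < ε * k}
      ⊆ {r ∈ range (2 ^ k) | (1 / 2 + ε) * k ≤ paritySum k r}
        ∪ {r ∈ range (2 ^ k) | (1 / 2 + ε) * k ≤ ((k - paritySum k r : ℕ) : ℝ)} := by
    intro r hr
    simp only [mem_union, mem_filter, abs_lt, not_and_or, not_lt,
      Nat.cast_sub (paritySum_le k r)] at hr ⊢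
    rcases hr with ⟨hr, hlow | hhigh⟩
    · exact Or.inr ⟨hr, by linarith⟩
    · exact Or.inl ⟨hr, by linarith⟩
  calc (#{r ∈ range (2 ^ k) | ¬|(paritySum k r : ℝ) - k / 2| < ε * k} : ℝ)
      ≤ #{r ∈ range (2 ^ k) | (1 / 2 + ε) * k ≤ paritySum k r}
        + #{r ∈ range (2 ^ k) | (1 / 2 + ε) * k ≤ ((k - paritySum k r : ℕ) : ℝ)} := by
        exact_mod_cast (card_le_card hsub).trans (card_union_le _ _)
    _ ≤ 2 * (2 * exp (-(ε ^ 2 / 3))) ^ k := by linarith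

end Chernoff

lemma card_Icc_filter_mod_eq_le (N n r : ℕ) : #{m ∈ Icc 1 N | m % n = r} ≤ N / n + 1 := by
  rw [← card_range (N / n + 1)]
  refine card_le_card_of_injOn (· / n) (fun m hm => ?_) (fun a ha b hb hab => ?_)
  · obtain ⟨hmIcc, -⟩ := mem_filter.mp hm
    exact mem_range.mpr (Nat.lt_succ_of_le (Nat.div_le_div_right (mem_Icc.mp hmIcc).2))
  · rw [← Nat.div_add_mod a n, ← Nat.div_add_mod b n, (mem_filter.mp ha).2,
      (mem_filter.mp hb).2]
    exact congrArg (n * · + r) hab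

lemma card_Icc_filter_mod_le (N : ℕ) {n : ℕ} (hn : 0 < n) (Q : ℕ → Prop) [DecidablePred Q] :
    #{m ∈ Icc 1 N | Q (m % n)} ≤ (N / n + 1) * #{r ∈ range n | Q r} := by
  refine card_le_mul_card_image_of_maps_to (f := (· % n))
    (fun m hm => mem_filter.mpr ⟨mem_range.mpr (Nat.mod_lt _ hn), (mem_filter.mp hm).2⟩) _
    fun r _ => (card_le_card fun m hm => ?_).trans (card_Icc_filter_mod_eq_le N n r)
  simp only [mem_filter] at hm ⊢
  exact ⟨hm.1.1, hm.2⟩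

theorem card_Icc_not_abs_paritySum_sub_lt_le {ε : ℝ} (hε : 0 < ε) (hε2 : ε ≤ 1 / 2)
    {N k : ℕ} (hk : 2 ^ k ≤ N) :
    (#{m ∈ Icc 1 N | ¬|(paritySum k m : ℝ) - k / 2| < ε * k} : ℝ)
      ≤ 4 * N * exp (-(ε ^ 2 / 3)) ^ k := by
  set x := exp (-(ε ^ 2 / 3))
  have hresidues : (#{m ∈ Icc 1 N | ¬|(paritySum k m : ℝ) - k / 2| < ε * k} : ℝ)
      ≤ (N / 2 ^ k + 1 : ℕ) * #{r ∈ range (2 ^ k) | ¬|(paritySum k r : ℝ) - k / 2| < ε * k} := by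
    have := card_Icc_filter_mod_le N (Nat.two_pow_pos k)
      fun r => ¬|(paritySum k r : ℝ) - k / 2| < ε * k
    simp only [paritySum_mod] at this
    exact_mod_cast this
  have hblocks : ((N / 2 ^ k + 1 : ℕ) : ℝ) * 2 ^ k ≤ 2 * N := by
    have : (N / 2 ^ k + 1) * 2 ^ k ≤ 2 * N := by
      rw [add_one_mul]; linarith [Nat.div_mul_le_self N (2 ^ k)]
    exact_mod_cast this
  calc _ ≤ ((N / 2 ^ k + 1 : ℕ) : ℝ) * (2 * (2 * x) ^ k) :=
        hresidues.trans (by gcongr; exact card_range_not_abs_paritySum_sub_lt_le hε hε2 k)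
    _ = 2 * (((N / 2 ^ k + 1 : ℕ) : ℝ) * 2 ^ k) * x ^ k := by ring
    _ ≤ 2 * (2 * N) * x ^ k := by gcongr
    _ = 4 * N * x ^ k := by ring

open scoped Classical in
lemma starDense_of_card_Icc_not_mem_le {S : Set ℕ} {C D : ℝ} (hD0 : 0 < D) (hD1 : D ≤ 1)
    (h : ∀ N : ℕ, 0 < N → (#{m ∈ Icc 1 N | m ∉ S} : ℝ) ≤ C * N ^ (1 - D)) :
    starDense S := by
  refine ⟨D, hD0, hD1, max C 1, by positivity, fun N hN => ?_⟩
  have hNpos : (0 : ℝ) < N := by exact_mod_cast hN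
  have hsplit : (countIn S N : ℝ) + #{m ∈ Icc 1 N | m ∉ S} = N := by
    rw [countIn]; exact_mod_cast (card_filter_add_card_filter_not _).trans (Nat.card_Icc 1 N)
  have hbad : (#{m ∈ Icc 1 N | m ∉ S} : ℝ) ≤ max C 1 * N / N ^ D := by
    calc (#{m ∈ Icc 1 N | m ∉ S} : ℝ) ≤ C * N ^ (1 - D) := h N hN
      _ ≤ max C 1 * N ^ (1 - D) := by gcongr; exact le_max_left C 1
      _ = max C 1 * N / N ^ D := by rw [rpow_sub hNpos, rpow_one, mul_div_assoc]
  rw [le_div_iff₀ hNpos, sub_mul, one_mul, div_mul_eq_mul_div]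
  linarith

lemma two_pow_le_of_le_floor_logb {N k : ℕ} (hN : 0 < N) (hk : k ≤ ⌊logb 2 N⌋₊) :
    2 ^ k ≤ N := by
  have := natFloor_logb_natCast 2 N
  rw [Nat.cast_ofNat] at this
  exact Nat.pow_le_of_le_log hN.ne' (this ▸ hk)

lemma floor_mul_logb_le_of_sqrt_lt {β : ℝ} (hβ : 0 ≤ β) {N m : ℕ} (hN : 0 < N)
    (hm : Nat.sqrt N < m) :
    ⌊β / 2 * logb 2 N⌋₊ ≤ ⌊β * logb 2 m⌋₊ := by
  refine Nat.floor_mono ?_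
  have hlog : logb 2 N ≤ 2 * logb 2 m := by
    calc logb 2 N ≤ logb 2 ((m : ℝ) ^ 2) := logb_le_logb_of_le one_lt_two
          (by exact_mod_cast hN) (by exact_mod_cast (Nat.sqrt_lt'.mp hm).le)
      _ = 2 * logb 2 m := by simp [logb_pow]
  nlinarith

lemma pow_floor_mul_logb_le {x : ℝ} (hx0 : 0 < x) (hx1 : x ≤ 1) (β : ℝ) {y : ℝ} (hy : 0 < y) :
    x ^ ⌊β * logb 2 y⌋₊ ≤ x⁻¹ * y ^ (β * logb 2 x) := by
  have hfloor : β * logb 2 y - 1 ≤ ⌊β * logb 2 y⌋₊ := by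
    linarith [Nat.lt_floor_add_one (β * logb 2 y)]
  calc x ^ ⌊β * logb 2 y⌋₊ ≤ x ^ (β * logb 2 y - 1) := by
        rw [← rpow_natCast]; exact rpow_le_rpow_of_exponent_ge hx0 hx1 hfloor
    _ = x⁻¹ * y ^ (β * logb 2 x) := by
        rw [rpow_sub_one hx0.ne', rpow_def_of_pos hx0, rpow_def_of_pos hy,
          logb, logb, div_eq_inv_mul]
        congr 2; ring

def logWindowSet (α : ℝ) (P : ℕ → ℕ → Prop) : Set ℕ :=
  {m | ∀ k : ℕ, ⌊α * logb 2 m⌋₊ ≤ k → k ≤ ⌊logb 2 m⌋₊ → P k m}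

lemma exists_not_of_not_mem_logWindowSet {α : ℝ} (hα : 0 ≤ α) {P : ℕ → ℕ → Prop} {N m : ℕ}
    (hN : 0 < N) (hmN : m ≤ N) (hm : Nat.sqrt N < m) (hbad : m ∉ logWindowSet α P) :
    ∃ k ∈ Icc ⌊α / 2 * logb 2 N⌋₊ ⌊logb 2 N⌋₊, ¬P k m := by
  simp only [logWindowSet, Set.mem_ofPred_eq, not_forall] at hbad
  obtain ⟨k, hk0, hk1, hk⟩ := hbad
  refine ⟨k, mem_Icc.mpr ⟨(floor_mul_logb_le_of_sqrt_lt hα hN hm).trans hk0,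
    hk1.trans (Nat.floor_mono ?_)⟩, hk⟩
  exact logb_le_logb_of_le one_lt_two (by exact_mod_cast (Nat.zero_le _).trans_lt hm)
    (by exact_mod_cast hmN)

lemma card_Icc_filter_le_sqrt_le (N : ℕ) :
    (#{m ∈ Icc 1 N | m ≤ Nat.sqrt N} : ℝ) ≤ N ^ (1 / 2 : ℝ) := by
  calc (#{m ∈ Icc 1 N | m ≤ Nat.sqrt N} : ℝ) ≤ #(Icc 1 (Nat.sqrt N)) := by
        exact_mod_cast card_le_card fun m hm => by
          simp only [mem_filter, mem_Icc] at hm ⊢; exact ⟨hm.1.1, hm.2⟩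
    _ = Nat.sqrt N := by simp
    _ ≤ N ^ (1 / 2 : ℝ) := by rw [← sqrt_eq_rpow]; exact nat_sqrt_le_real_sqrt

open scoped Classical in
lemma filter_not_mem_logWindowSet_subset {α : ℝ} (hα : 0 ≤ α) {P : ℕ → ℕ → Prop}
    [∀ k, DecidablePred (P k)] {N : ℕ} (hN : 0 < N) :
    {m ∈ Icc 1 N | m ∉ logWindowSet α P} ⊆ {m ∈ Icc 1 N | m ≤ Nat.sqrt N}
      ∪ (Icc ⌊α / 2 * logb 2 N⌋₊ ⌊logb 2 N⌋₊).biUnion fun k => {m ∈ Icc 1 N | ¬P k m} := by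
  intro m hm
  obtain ⟨hmIcc, hbad⟩ := mem_filter.mp hm
  rcases le_or_gt m (Nat.sqrt N) with hsmall | hlarge
  · exact mem_union_left _ (mem_filter.mpr ⟨hmIcc, hsmall⟩)
  · obtain ⟨k, hk, hPk⟩ :=
      exists_not_of_not_mem_logWindowSet hα hN (mem_Icc.mp hmIcc).2 hlarge hbad
    exact mem_union_right _ (mem_biUnion.mpr ⟨k, hk, mem_filter.mpr ⟨hmIcc, hPk⟩⟩)

open scoped Classical in
lemma card_Icc_not_mem_logWindowSet_le {α x A : ℝ} (hα : 0 ≤ α) (hx0 : 0 < x) (hx1 : x < 1)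
    (hA : 0 ≤ A) {P : ℕ → ℕ → Prop} [∀ k, DecidablePred (P k)]
    (h : ∀ N k : ℕ, 2 ^ k ≤ N → (#{m ∈ Icc 1 N | ¬P k m} : ℝ) ≤ A * N * x ^ k)
    {N : ℕ} (hN : 0 < N) :
    (#{m ∈ Icc 1 N | m ∉ logWindowSet α P} : ℝ)
      ≤ N ^ (1 / 2 : ℝ) + A / (x * (1 - x)) * N ^ (1 + α / 2 * logb 2 x) := by
  set K₀ := ⌊α / 2 * logb 2 N⌋₊
  have hlevels : ∑ k ∈ Icc K₀ ⌊logb 2 N⌋₊, (#{m ∈ Icc 1 N | ¬P k m} : ℝ)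
      ≤ A / (x * (1 - x)) * N ^ (1 + α / 2 * logb 2 x) := by
    calc ∑ k ∈ Icc K₀ ⌊logb 2 N⌋₊, (#{m ∈ Icc 1 N | ¬P k m} : ℝ)
        ≤ ∑ k ∈ Icc K₀ ⌊logb 2 N⌋₊, A * N * x ^ k :=
          sum_le_sum fun k hk => h N k (two_pow_le_of_le_floor_logb hN (mem_Icc.mp hk).2)
      _ = A * N * ∑ k ∈ Ico K₀ (⌊logb 2 N⌋₊ + 1), x ^ k := by
          rw [← Ico_add_one_right_eq_Icc, mul_sum]
      _ ≤ A * N * (x ^ K₀ / (1 - x)) := by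
          gcongr; exact geom_sum_Ico_le_of_lt_one hx0.le hx1
      _ ≤ A * N * (x⁻¹ * N ^ (α / 2 * logb 2 x) / (1 - x)) := by
          gcongr; exact pow_floor_mul_logb_le hx0 hx1.le _ (by positivity)
      _ = A / (x * (1 - x)) * N ^ (1 + α / 2 * logb 2 x) := by
          rw [rpow_add (by positivity), rpow_one]; field_simp
  calc (#{m ∈ Icc 1 N | m ∉ logWindowSet α P} : ℝ)
      ≤ #{m ∈ Icc 1 N | m ≤ Nat.sqrt N}
        + ∑ k ∈ Icc K₀ ⌊logb 2 N⌋₊, (#{m ∈ Icc 1 N | ¬P k m} : ℝ) := by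
        exact_mod_cast (card_le_card (filter_not_mem_logWindowSet_subset hα hN)).trans
          ((card_union_le _ _).trans (add_le_add le_rfl card_biUnion_le))
    _ ≤ _ := add_le_add (card_Icc_filter_le_sqrt_le N) hlevels

theorem starDense_logWindowSet {α x A : ℝ} (hα : 0 < α) (hx0 : 0 < x) (hx1 : x < 1)
    (hA : 0 ≤ A) {P : ℕ → ℕ → Prop} [∀ k, DecidablePred (P k)]
    (h : ∀ N k : ℕ, 2 ^ k ≤ N → (#{m ∈ Icc 1 N | ¬P k m} : ℝ) ≤ A * N * x ^ k) :
    starDense (logWindowSet α P) := by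
  set e := α / 2 * logb 2 x
  have he : e < 0 := mul_neg_of_pos_of_neg (by positivity) (logb_neg one_lt_two hx0 hx1)
  set D := min (1 / 2) (-e)
  refine starDense_of_card_Icc_not_mem_le (C := 1 + A / (x * (1 - x))) (D := D)
    (lt_min (by norm_num) (by linarith)) ((min_le_left _ _).trans (by norm_num)) fun N hN => ?_
  have hN1 : (1 : ℝ) ≤ N := by exact_mod_cast hN
  have hhalf : (N : ℝ) ^ (1 / 2 : ℝ) ≤ N ^ (1 - D) :=
    rpow_le_rpow_of_exponent_le hN1 (by linarith [min_le_left (1 / 2 : ℝ) (-e)])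
  have hlarge : (N : ℝ) ^ (1 + e) ≤ N ^ (1 - D) :=
    rpow_le_rpow_of_exponent_le hN1 (by linarith [min_le_right (1 / 2 : ℝ) (-e)])
  calc _ ≤ N ^ (1 / 2 : ℝ) + A / (x * (1 - x)) * N ^ (1 + e) :=
        card_Icc_not_mem_logWindowSet_le hα.le hx0 hx1 hA h hN
    _ ≤ N ^ (1 - D) + A / (x * (1 - x)) * N ^ (1 - D) := by gcongr
    _ = (1 + A / (x * (1 - x))) * N ^ (1 - D) := by ring

open scoped Classical in
lemma countIn_mono {A B : Set ℕ} (h : A ⊆ B) (n : ℕ) : countIn A n ≤ countIn B n :=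
  card_le_card (monotone_filter_right _ fun _ _ hm => h hm)

lemma starDense.mono {A B : Set ℕ} (hA : starDense A) (h : A ⊆ B) : starDense B := by
  obtain ⟨D, hD0, hD1, C, hC, hAC⟩ := hA
  refine ⟨D, hD0, hD1, C, hC, fun N hN => (hAC N hN).trans ?_⟩
  gcongr
  exact countIn_mono h N

theorem parity_sum_starDense_general (ε : ℝ) (hε : 0 < ε) (α : ℝ) (hα0 : 0 < α) :
    starDense {m : ℕ |
      ∀ k : ℕ, ⌊α * Real.logb 2 m⌋₊ ≤ k → k ≤ ⌊Real.logb 2 m⌋₊ →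
        -(ε * k) < (∑ i ∈ Finset.range k, (parity m i : ℝ)) - k / 2 ∧
        (∑ i ∈ Finset.range k, (parity m i : ℝ)) - k / 2 < ε * k} := by
  set ε' := min ε (1 / 2)
  have hdense : starDense (logWindowSet α fun k m => |(paritySum k m : ℝ) - k / 2| < ε' * k) :=
    starDense_logWindowSet hα0 (exp_pos _) (exp_lt_one_iff.mpr (by simp; positivity))
      (by norm_num) fun N k hk =>
        card_Icc_not_abs_paritySum_sub_lt_le (lt_min hε (by norm_num)) (min_le_right _ _) hk
  refine hdense.mono fun m hm k hk0 hk1 => ?_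
  have hε'k : ε' * k ≤ ε * k := by gcongr; exact min_le_left _ _
  have hnear := abs_lt.mp (hm k hk0 hk1)
  push_cast [paritySum] at hnear
  constructor <;> linarith [hnear.1, hnear.2]

theorem parity_sum_starDense (ε : ℝ) (hε : 0 < ε) (α : ℝ) (hα0 : 0 < α) (hα1 : α ≤ 1) :
    starDense {m : ℕ |
      ∀ k : ℕ, ⌊α * Real.logb 2 m⌋₊ ≤ k → k ≤ ⌊Real.logb 2 m⌋₊ →
        -(ε * k) < (∑ i ∈ Finset.range k, (parity m i : ℝ)) - k / 2 ∧
        (∑ i ∈ Finset.range k, (parity m i : ℝ)) - k / 2 < ε * k} :=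
  parity_sum_starDense_general ε hε α hα0
end

section
/- Suppose α ∈ (0, log₃ 2], 0 < D ≤ 1, and S ⊆ ℤ⁺ has D-density. Then the set {m ∈ ℤ⁺ : ⌊(3^(⌊α·⌊log₂ m⌋⌋)/2^(⌊log₂ m⌋)) · m⌋ ∈ S} has (D·α·log₂ 3)-density. -/
open Finset Real

theorem countIn_add_countIn_compl (A : Set ℕ) (n : ℕ) : countIn A n + countIn Aᶜ n = n := by
  classical
  have := card_filter_add_card_filter_not (s := Icc 1 n) (· ∈ A)
  rw [Nat.card_Icc, Nat.add_sub_cancel] at this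
  unfold countIn
  convert this

theorem hasCDdensity_iff_countIn_compl_le (S : Set ℕ) (C D : ℝ) :
    hasCDdensity S C D ↔ ∀ N : ℕ, 0 < N → (countIn Sᶜ N : ℝ) ≤ C * (N : ℝ) ^ (1 - D) := by
  refine forall₂_congr fun N hN => ?_
  have hN' : (0 : ℝ) < N := by exact_mod_cast hN
  have hsplit : (countIn S N : ℝ) + countIn Sᶜ N = N := by
    exact_mod_cast countIn_add_countIn_compl S N
  have hpow : C / (N : ℝ) ^ D * N = C * (N : ℝ) ^ (1 - D) := by
    rw [rpow_sub hN', rpow_one]; ring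
  rw [le_div_iff₀ hN', sub_mul, one_mul, hpow]
  constructor <;> intro h <;> linarith

theorem countIn_preimage_le {f : ℕ → ℕ} {A : Set ℕ} {N M B : ℕ}
    (hmaps : ∀ m ∈ Icc 1 N, f m ∈ Icc 1 M) (hfibre : ∀ n, #{m ∈ Icc 1 N | f m = n} ≤ B) :
    countIn (f ⁻¹' A) N ≤ B * countIn A M := by
  classical
  refine card_le_mul_card_image_of_maps_to (f := f) (fun m hm => ?_) B fun n _ => ?_
  · rw [mem_filter] at hm ⊢
    exact ⟨hmaps m hm.1, hm.2⟩
  · exact (card_le_card (filter_subset_filter _ (filter_subset _ _))).trans (hfibre n)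

theorem card_le_natCeil_inv_of_floor_mul_eq {c : ℝ} (hc : 0 < c) {s : Finset ℕ} {n : ℕ}
    (hs : ∀ m ∈ s, ⌊c * m⌋₊ = n) : #s ≤ ⌈c⁻¹⌉₊ := by
  have hsub : s ⊆ Ico ⌈n / c⌉₊ ⌈n / c + c⁻¹⌉₊ := fun m hm => by
    obtain ⟨h1, h2⟩ := (Nat.floor_eq_iff (by positivity)).1 (hs m hm)
    rw [mem_Ico, Nat.ceil_le, Nat.lt_ceil, div_le_iff₀ hc, inv_eq_one_div,
      ← add_div, lt_div_iff₀ hc]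
    constructor <;> linarith
  calc #s ≤ ⌈n / c + c⁻¹⌉₊ - ⌈n / c⌉₊ := (card_le_card hsub).trans (Nat.card_Ico _ _).le
    _ ≤ ⌈c⁻¹⌉₊ := by have := Nat.ceil_add_le (n / c) c⁻¹; omega

noncomputable def scale (α : ℝ) (m : ℕ) : ℕ :=
  ⌊(3 : ℝ) ^ ⌊α * Nat.log 2 m⌋₊ / 2 ^ Nat.log 2 m * m⌋₊

theorem setOf_floor_mul_mem_eq_scale_preimage (α : ℝ) (S : Set ℕ) :
    {m : ℕ | ⌊(3 : ℝ) ^ ⌊α * ⌊Real.logb 2 m⌋₊⌋₊ / 2 ^ ⌊Real.logb 2 m⌋₊ * m⌋₊ ∈ S} =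
      scale α ⁻¹' S := by
  have hlog (m : ℕ) : ⌊Real.logb 2 m⌋₊ = Nat.log 2 m := by
    simpa using Real.natFloor_logb_natCast 2 m
  ext m
  simp only [Set.mem_ofPred_eq, Set.mem_preimage, hlog, scale]

section scale

variable {α : ℝ} {m : ℕ}

theorem mem_Ico_scale (hm : m ≠ 0) :
    scale α m ∈ Ico (3 ^ ⌊α * Nat.log 2 m⌋₊) (2 * 3 ^ ⌊α * Nat.log 2 m⌋₊) := by
  set k := Nat.log 2 m
  set j := ⌊α * k⌋₊
  have hlow : ((2 ^ k : ℕ) : ℝ) ≤ m := by exact_mod_cast Nat.pow_log_le_self 2 hm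
  have hupp : (m : ℝ) < (2 ^ (k + 1) : ℕ) := by
    exact_mod_cast Nat.lt_pow_succ_log_self one_lt_two m
  push_cast at hlow hupp
  have h2k : (0 : ℝ) < 2 ^ k := by positivity
  have hval : (3 : ℝ) ^ j / 2 ^ k * m = 3 ^ j * (m / 2 ^ k) := by ring
  have hratio : 1 ≤ (m : ℝ) / 2 ^ k ∧ (m : ℝ) / 2 ^ k < 2 := by
    rw [le_div_iff₀ h2k, div_lt_iff₀ h2k, one_mul, ← pow_succ']
    exact ⟨hlow, hupp⟩
  rw [mem_Ico, scale, Nat.le_floor_iff (by positivity), Nat.floor_lt (by positivity), hval]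
  push_cast
  constructor <;> nlinarith [pow_pos (three_pos : (0 : ℝ) < 3) j]

theorem log_three_scale (hm : m ≠ 0) : Nat.log 3 (scale α m) = ⌊α * Nat.log 2 m⌋₊ := by
  obtain ⟨hlow, hupp⟩ := mem_Ico.1 (mem_Ico_scale (α := α) hm)
  exact Nat.log_eq_of_pow_le_of_lt_pow hlow (by rw [pow_succ']; omega)

theorem scale_mem_Icc (hα : 0 ≤ α) {N : ℕ} (hm : m ∈ Icc 1 N) :
    scale α m ∈ Icc 1 (2 * 3 ^ ⌊α * Nat.log 2 N⌋₊) := by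
  obtain ⟨hm1, hmN⟩ := mem_Icc.1 hm
  obtain ⟨hlow, hupp⟩ := mem_Ico.1 (mem_Ico_scale (α := α) (by omega : m ≠ 0))
  have hexp : ⌊α * Nat.log 2 m⌋₊ ≤ ⌊α * Nat.log 2 N⌋₊ :=
    Nat.floor_le_floor (mul_le_mul_of_nonneg_left (by exact_mod_cast Nat.log_mono_right hmN) hα)
  have := Nat.pow_le_pow_right three_pos hexp
  have := Nat.one_le_pow ⌊α * Nat.log 2 m⌋₊ 3 three_pos
  exact mem_Icc.2 ⟨by omega, by omega⟩

theorem card_scale_fibre_le (hα : 0 < α) {N : ℕ} {G : ℝ}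
    (hG : ∀ k ≤ Nat.log 2 N, (2 : ℝ) ^ k / 3 ^ ⌊α * k⌋₊ ≤ G) (n : ℕ) :
    #{m ∈ Icc 1 N | scale α m = n} ≤ ⌈α⁻¹⌉₊ * ⌈G⌉₊ := by
  set F := {m ∈ Icc 1 N | scale α m = n}
  have hF : ∀ m ∈ F, m ≠ 0 ∧ m ≤ N ∧ scale α m = n := fun m hm => by
    simp only [F, mem_filter, mem_Icc] at hm
    exact ⟨by omega, hm.1.2, hm.2⟩
  have hlogs : #(F.image (Nat.log 2)) ≤ ⌈α⁻¹⌉₊ := by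
    refine card_le_natCeil_inv_of_floor_mul_eq hα (n := Nat.log 3 n) fun k hk => ?_
    obtain ⟨m, hm, rfl⟩ := mem_image.1 hk
    obtain ⟨hm0, -, rfl⟩ := hF m hm
    exact (log_three_scale hm0).symm
  have hlayer : ∀ k ∈ F.image (Nat.log 2), #{m ∈ F | Nat.log 2 m = k} ≤ ⌈G⌉₊ := by
    intro k hk
    obtain ⟨m₀, hm₀, hk₀⟩ := mem_image.1 hk
    refine (card_le_natCeil_inv_of_floor_mul_eq (c := 3 ^ ⌊α * k⌋₊ / 2 ^ k) (by positivity)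
      (n := n) fun m hm => ?_).trans (Nat.ceil_mono ?_)
    · obtain ⟨hmF, rfl⟩ := mem_filter.1 hm
      obtain ⟨-, -, rfl⟩ := hF m hmF
      rfl
    · rw [inv_div, ← hk₀]
      exact hG _ (Nat.log_mono_right (hF m₀ hm₀).2.1)
  calc #F ≤ ⌈G⌉₊ * #(F.image (Nat.log 2)) := card_le_mul_card_image F _ hlayer
    _ ≤ ⌈α⁻¹⌉₊ * ⌈G⌉₊ := by rw [mul_comm]; exact Nat.mul_le_mul_right _ hlogs

end scale

theorem three_rpow_mul_natCast (x : ℝ) (k : ℕ) :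
    (3 : ℝ) ^ (x * k) = ((2 : ℝ) ^ k) ^ (x * logb 2 3) := by
  rw [← rpow_natCast, ← rpow_mul zero_le_two]
  conv_lhs => rw [← rpow_logb zero_lt_two (by norm_num) (by norm_num : (0 : ℝ) < 3)]
  rw [← rpow_mul zero_le_two]; ring_nf

theorem three_pow_floor_le {α : ℝ} (hα : 0 ≤ α) (k : ℕ) :
    (3 : ℝ) ^ ⌊α * k⌋₊ ≤ ((2 : ℝ) ^ k) ^ (α * logb 2 3) := by
  rw [← three_rpow_mul_natCast, ← rpow_natCast]
  exact rpow_le_rpow_of_exponent_le (by norm_num) (Nat.floor_le (by positivity))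

theorem two_pow_div_three_pow_floor_le (α : ℝ) (k : ℕ) :
    (2 : ℝ) ^ k / 3 ^ ⌊α * k⌋₊ ≤ 3 * ((2 : ℝ) ^ k) ^ (1 - α * logb 2 3) := by
  have h2k : (0 : ℝ) < 2 ^ k := by positivity
  have hfloor : ((2 : ℝ) ^ k) ^ (α * logb 2 3) ≤ 3 * 3 ^ ⌊α * k⌋₊ := by
    rw [← three_rpow_mul_natCast, ← pow_succ', ← rpow_natCast]
    exact rpow_le_rpow_of_exponent_le (by norm_num) (by exact_mod_cast (Nat.lt_floor_add_one _).le)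
  rw [rpow_sub h2k, rpow_one, div_le_iff₀ (by positivity)]
  calc (2 : ℝ) ^ k = 2 ^ k / ((2 : ℝ) ^ k) ^ (α * logb 2 3) * ((2 : ℝ) ^ k) ^ (α * logb 2 3) := by
        field_simp
    _ ≤ 2 ^ k / ((2 : ℝ) ^ k) ^ (α * logb 2 3) * (3 * 3 ^ ⌊α * k⌋₊) := by gcongr
    _ = _ := by ring

theorem countIn_scale_preimage_le {α : ℝ} (hα : 0 < α) (hβ : α * logb 2 3 ≤ 1) (A : Set ℕ)
    {N : ℕ} (hN : 0 < N) :
    (countIn (scale α ⁻¹' A) N : ℝ) ≤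
      (α⁻¹ + 1) * (4 * (N : ℝ) ^ (1 - α * logb 2 3)) * countIn A (2 * 3 ^ ⌊α * Nat.log 2 N⌋₊) := by
  set G := 3 * (N : ℝ) ^ (1 - α * logb 2 3)
  have hG : ∀ k ≤ Nat.log 2 N, (2 : ℝ) ^ k / 3 ^ ⌊α * k⌋₊ ≤ G := fun k hk => by
    have h2k : ((2 ^ k : ℕ) : ℝ) ≤ N :=
      Nat.cast_le.2 ((Nat.pow_le_pow_right two_pos hk).trans (Nat.pow_log_le_self 2 hN.ne'))
    push_cast at h2k
    exact (two_pow_div_three_pow_floor_le α k).trans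
      (mul_le_mul_of_nonneg_left (rpow_le_rpow (by positivity) h2k (by linarith)) (by norm_num))
  have hcount := countIn_preimage_le (A := A) (fun m => scale_mem_Icc hα.le)
    (card_scale_fibre_le hα hG)
  have hceilα : (⌈α⁻¹⌉₊ : ℝ) ≤ α⁻¹ + 1 := (Nat.ceil_lt_add_one (by positivity)).le
  have hceilG : (⌈G⌉₊ : ℝ) ≤ 4 * (N : ℝ) ^ (1 - α * logb 2 3) := by
    have := Nat.ceil_lt_add_one (by positivity : 0 ≤ G)
    have := one_le_rpow (by exact_mod_cast hN : (1 : ℝ) ≤ N) (by linarith : 0 ≤ 1 - α * logb 2 3)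
    linarith
  calc (countIn (scale α ⁻¹' A) N : ℝ)
        ≤ ⌈α⁻¹⌉₊ * ⌈G⌉₊ * countIn A (2 * 3 ^ ⌊α * Nat.log 2 N⌋₊) := by exact_mod_cast hcount
    _ ≤ _ := by gcongr

theorem natCast_two_mul_three_pow_floor_rpow_le {α D : ℝ} (hα : 0 ≤ α) (hD0 : 0 ≤ D) (hD1 : D ≤ 1)
    {N : ℕ} (hN : 0 < N) :
    ((2 * 3 ^ ⌊α * Nat.log 2 N⌋₊ : ℕ) : ℝ) ^ (1 - D) ≤
      2 * (N : ℝ) ^ (α * logb 2 3 * (1 - D)) := by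
  have h2K : ((2 ^ Nat.log 2 N : ℕ) : ℝ) ≤ N := Nat.cast_le.2 (Nat.pow_log_le_self 2 hN.ne')
  push_cast at h2K
  have hM : (2 * 3 ^ ⌊α * Nat.log 2 N⌋₊ : ℝ) ≤ 2 * (N : ℝ) ^ (α * logb 2 3) := by
    have hL : 0 ≤ logb 2 3 := logb_nonneg one_lt_two (by norm_num)
    gcongr
    exact (three_pow_floor_le hα _).trans (by gcongr)
  have h2 : (2 : ℝ) ^ (1 - D) ≤ 2 := by
    simpa using rpow_le_rpow_of_exponent_le one_le_two (by linarith : 1 - D ≤ 1)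
  push_cast
  calc (2 * 3 ^ ⌊α * Nat.log 2 N⌋₊ : ℝ) ^ (1 - D) ≤ (2 * (N : ℝ) ^ (α * logb 2 3)) ^ (1 - D) := by
        gcongr
    _ = 2 ^ (1 - D) * (N : ℝ) ^ (α * logb 2 3 * (1 - D)) := by
        rw [mul_rpow (by norm_num) (by positivity), ← rpow_mul (by positivity)]
    _ ≤ _ := by gcongr

theorem scale_density (α : ℝ) (hα0 : 0 < α) (hα1 : α ≤ Real.logb 3 2)
    (D : ℝ) (hD0 : 0 < D) (hD1 : D ≤ 1) (S : Set ℕ) (hS : hasDdensity S D) :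
    hasDdensity
      {m : ℕ |
        ⌊(3 : ℝ) ^ ⌊α * ⌊Real.logb 2 m⌋₊⌋₊ / 2 ^ ⌊Real.logb 2 m⌋₊ * m⌋₊ ∈ S}
      (D * α * Real.logb 2 3) := by
  obtain ⟨C, hC0, hC⟩ := hS
  have hβ : α * logb 2 3 ≤ 1 := by
    have hL : 0 < logb 2 3 := logb_pos one_lt_two (by norm_num)
    rwa [← inv_logb, ← mul_one (logb 2 3)⁻¹, le_inv_mul_iff₀' hL] at hα1
  rw [setOf_floor_mul_mem_eq_scale_preimage]
  refine ⟨8 * C * (α⁻¹ + 1), by positivity, ?_⟩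
  rw [hasCDdensity_iff_countIn_compl_le] at hC ⊢
  intro N hN
  set M := 2 * 3 ^ ⌊α * Nat.log 2 N⌋₊
  have hN' : (0 : ℝ) < N := by exact_mod_cast hN
  calc (countIn (scale α ⁻¹' S)ᶜ N : ℝ) = countIn (scale α ⁻¹' Sᶜ) N := rfl
    _ ≤ (α⁻¹ + 1) * (4 * (N : ℝ) ^ (1 - α * logb 2 3)) * countIn Sᶜ M :=
        countIn_scale_preimage_le hα0 hβ Sᶜ hN
    _ ≤ (α⁻¹ + 1) * (4 * (N : ℝ) ^ (1 - α * logb 2 3)) *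
          (C * (2 * (N : ℝ) ^ (α * logb 2 3 * (1 - D)))) := by
        gcongr
        exact (hC M (by positivity)).trans (mul_le_mul_of_nonneg_left
          (natCast_two_mul_three_pow_floor_rpow_le hα0.le hD0.le hD1 hN) hC0.le)
    _ = 8 * C * (α⁻¹ + 1) * (N : ℝ) ^ (1 - D * α * logb 2 3) := by
        rw [show 1 - D * α * logb 2 3 = (1 - α * logb 2 3) + α * logb 2 3 * (1 - D) by ring,
          rpow_add hN']
        ring
end
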